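/- Let L be a finite lattice, I_L the join-meet ideal in K[L], J a poset ideal of L with a maximal element e, and set H = {a ∈ L : a ≱ e}. Then every element a of H satisfies a·e ∈ (I_L, J \ {e}); that is, H is contained in the degree-one part of the colon ideal (I_L, J \ {e}) : e. -/

import Mathlib

open MvPolynomial

/-- A poset ideal (order ideal) of a finite lattice. -/
def IsPosetIdeal {L : Type*} [Lattice L] (J : Set L) : Prop :=
  ∀ a b : L, a ≤ b → b ∈ J → a ∈ J

/-- The join-meet ideal of a finite lattice `L` in `K[L]`. -/
noncomputable def joinMeetIdeal (K : Type*) [Field K] (L : Type*) [Lattice L] :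
    Ideal (MvPolynomial L K) :=
  Ideal.span {p | ∃ a b : L, ¬ a ≤ b ∧ ¬ b ≤ a ∧
    p = X a * X b - X (a ⊔ b) * X (a ⊓ b)}

/-- The ideal `(I_L, T)` generated by the join-meet ideal together with the
variables in `T`. -/
noncomputable def joinMeetIdealWith (K : Type*) [Field K] (L : Type*) [Lattice L]
    (T : Set L) : Ideal (MvPolynomial L K) :=
  joinMeetIdeal K L ⊔ Ideal.span (X '' T)

section JoinMeet

variable {K : Type*} [Field K] {L : Type*} [Lattice L]

theorem X_mem_joinMeetIdealWith {T : Set L} {a : L} (ha : a ∈ T) :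
    (X a : MvPolynomial L K) ∈ joinMeetIdealWith K L T :=
  Ideal.mem_sup_right (Ideal.subset_span ⟨a, ha, rfl⟩)

theorem X_mul_X_sub_mem_joinMeetIdeal {a b : L} (hab : ¬ a ≤ b) (hba : ¬ b ≤ a) :
    (X a * X b - X (a ⊔ b) * X (a ⊓ b) : MvPolynomial L K) ∈ joinMeetIdeal K L :=
  Ideal.subset_span ⟨a, b, hab, hba, rfl⟩

/-- Modulo `I_L` every `x_a x_b` equals `x_{a ⊔ b} x_{a ⊓ b}`, trivially so when `a, b` are
comparable. -/
theorem X_mul_X_mem_joinMeetIdealWith_of_inf_mem {T : Set L} {a b : L} (h : a ⊓ b ∈ T) :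
    (X a * X b : MvPolynomial L K) ∈ joinMeetIdealWith K L T := by
  by_cases hab : a ≤ b
  · rw [inf_eq_left.mpr hab] at h
    exact Ideal.mul_mem_right _ _ (X_mem_joinMeetIdealWith h)
  by_cases hba : b ≤ a
  · rw [inf_eq_right.mpr hba] at h
    exact Ideal.mul_mem_left _ _ (X_mem_joinMeetIdealWith h)
  have hbinomial : (X a * X b - X (a ⊔ b) * X (a ⊓ b) : MvPolynomial L K) ∈
      joinMeetIdealWith K L T :=
    Ideal.mem_sup_left (X_mul_X_sub_mem_joinMeetIdeal hab hba)
  simpa only [sub_add_cancel] using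
    add_mem hbinomial (Ideal.mul_mem_left _ (X (a ⊔ b)) (X_mem_joinMeetIdealWith h))

end JoinMeet

theorem IsPosetIdeal.inf_mem_diff_singleton {L : Type*} [Lattice L] {J : Set L}
    (hJ : IsPosetIdeal J) {a e : L} (he : e ∈ J) (ha : ¬ e ≤ a) : a ⊓ e ∈ J \ {e} :=
  ⟨hJ _ e inf_le_right he, fun h => ha (h ▸ inf_le_left)⟩

theorem H_in_colon_general {K : Type*} [Field K] {L : Type*} [Lattice L]
    (J : Set L) (hJ : IsPosetIdeal J) (e : L) (he : e ∈ J) :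
    ∀ a ∈ {a : L | ¬ e ≤ a},
      (X a * X e : MvPolynomial L K) ∈ joinMeetIdealWith K L (J \ {e}) :=
  fun _ ha => X_mul_X_mem_joinMeetIdealWith_of_inf_mem (hJ.inf_mem_diff_singleton he ha)

theorem H_in_colon {K : Type*} [Field K] {L : Type*} [Lattice L] [Fintype L]
    (J : Set L) (hJ : IsPosetIdeal J) (e : L) (he : e ∈ J)
    (hmax : ∀ b ∈ J, e ≤ b → b = e) :
    ∀ a ∈ {a : L | ¬ e ≤ a},
      (X a * X e : MvPolynomial L K) ∈ joinMeetIdealWith K L (J \ {e}) :=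
  H_in_colon_general J hJ e he
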